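/- arXiv:2410.14757 — 4 statements merged into one kernel-verified Lean document; each statement's English description precedes it below -/
import Mathlib

section
/- Let p ∈ ℂ[α₁,…,αₙ] be a nonzero polynomial and let P be a linear differential operator with polynomial coefficients of order d that annihilates 1/p (as an operator acting on rational functions on the complement of p=0). Then p^d · P lies in the left ideal of the Weyl algebra generated by the operators p∂_{αᵢ} + ∂p/∂αᵢ for i = 1,…,n. -/
set_option synthInstance.maxHeartbeats 1000000
set_option maxHeartbeats 1000000


open MvPolynomial

noncomputable section

/-- The polynomial ring `ℂ[α₁,…,αₙ]`. -/
abbrev WPoly (n : ℕ) := MvPolynomial (Fin n) ℂ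

/-- The field of rational functions `ℂ(α₁,…,αₙ)`. -/
abbrev RatF (n : ℕ) := FractionRing (WPoly n)

/-- The operator of multiplication by a polynomial, acting on rational functions. -/
noncomputable def mulOp {n : ℕ} (q : WPoly n) : Module.End ℂ (RatF n) :=
  LinearMap.mulLeft ℂ (algebraMap (WPoly n) (RatF n) q)

/-- `P` is a differential operator of order at most `d`: it is a `ℂ`-linear combination of
operators `q · ∂^β` with `|β| ≤ d`, where the `∂`'s are given by the family `D`. -/
def OrderLE {n : ℕ} (D : Fin n → Module.End ℂ (RatF n)) (d : ℕ)
    (P : Module.End ℂ (RatF n)) : Prop :=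
  P ∈ Submodule.span ℂ {E : Module.End ℂ (RatF n) |
    ∃ (q : WPoly n) (l : List (Fin n)), l.length ≤ d ∧ E = mulOp q * (l.map D).prod}

namespace Stmt0Aux

variable {n : ℕ}

lemma ml_mul (a b : RatF n) :
    LinearMap.mulLeft ℂ (a * b) = LinearMap.mulLeft ℂ a * LinearMap.mulLeft ℂ b := by
  ext f; simp [mul_assoc]

lemma ml_one : LinearMap.mulLeft ℂ (1 : RatF n) = 1 := by ext f; simp

lemma ml_zero : LinearMap.mulLeft ℂ (0 : RatF n) = 0 := by ext f; simp

lemma ml_add (a b : RatF n) :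
    LinearMap.mulLeft ℂ (a + b) = LinearMap.mulLeft ℂ a + LinearMap.mulLeft ℂ b := by
  ext f; simp [add_mul]

lemma ml_smul (c : ℂ) (a : RatF n) :
    LinearMap.mulLeft ℂ (c • a) = c • LinearMap.mulLeft ℂ a := by
  ext f; simp [smul_mul_assoc]

lemma mulOp_mul (a b : WPoly n) : mulOp (a * b) = mulOp a * mulOp b := by
  rw [mulOp, map_mul, ml_mul]; rfl

lemma aM_csmul (c : ℂ) (v : WPoly n) :
    algebraMap (WPoly n) (RatF n) (c • v) = c • algebraMap (WPoly n) (RatF n) v :=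
  map_smul (IsScalarTower.toAlgHom ℂ (WPoly n) (RatF n)) c v

lemma D_mul_ml (D : Fin n → Module.End ℂ (RatF n))
    (hLeib : ∀ i (a b : RatF n), D i (a * b) = a * D i b + D i a * b)
    (i : Fin n) (w : RatF n) :
    D i * LinearMap.mulLeft ℂ w
      = LinearMap.mulLeft ℂ w * D i + LinearMap.mulLeft ℂ (D i w) := by
  ext f
  simp [Module.End.mul_apply, hLeib i w f]

lemma D_one (D : Fin n → Module.End ℂ (RatF n))
    (hLeib : ∀ i (a b : RatF n), D i (a * b) = a * D i b + D i a * b)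
    (i : Fin n) : D i 1 = 0 := by
  have h := hLeib i 1 1
  rw [one_mul, one_mul, mul_one] at h
  exact left_eq_add.mp h

lemma D_inv (D : Fin n → Module.End ℂ (RatF n))
    (hLeib : ∀ i (a b : RatF n), D i (a * b) = a * D i b + D i a * b)
    (i : Fin n) (u : RatF n) (hu : u ≠ 0) :
    D i u⁻¹ = -(D i u * u⁻¹ * u⁻¹) := by
  have h := hLeib i u u⁻¹
  rw [mul_inv_cancel₀ hu, D_one D hLeib i] at h
  have hx : u * D i u⁻¹ = -(D i u * u⁻¹) := by linear_combination -h
  have h2 : D i u⁻¹ = u⁻¹ * (u * D i u⁻¹) := by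
    field_simp
  rw [h2, hx]
  ring

lemma p_mul_pderiv_pow (p : WPoly n) (i : Fin n) (k : ℕ) :
    p * pderiv i (p ^ k) = k • (p ^ k * pderiv i p) := by
  cases k with
  | zero => simp
  | succ m =>
    rw [Derivation.leibniz_pow, smul_eq_mul, mul_smul_comm, Nat.succ_sub_one]
    congr 1
    ring

lemma step1 (p : WPoly n) (D : Fin n → Module.End ℂ (RatF n))
    (hLeib : ∀ i (a b : RatF n), D i (a * b) = a * D i b + D i a * b)
    (halg : ∀ i (q : WPoly n), D i (algebraMap (WPoly n) (RatF n) q)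
        = algebraMap (WPoly n) (RatF n) (pderiv i q))
    (i : Fin n) (k : ℕ) :
    mulOp (p ^ (k + 1)) * D i
      = (mulOp p * D i + mulOp (-((k : WPoly n) * pderiv i p))) * mulOp (p ^ k) := by
  have hmap : algebraMap (WPoly n) (RatF n) p
        * algebraMap (WPoly n) (RatF n) (pderiv i (p ^ k))
      = algebraMap (WPoly n) (RatF n) ((k : WPoly n) * pderiv i p)
          * algebraMap (WPoly n) (RatF n) (p ^ k) := by
    rw [← map_mul, ← map_mul]
    exact congrArg _ (by rw [p_mul_pderiv_pow, nsmul_eq_mul]; ring)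
  have hpow : algebraMap (WPoly n) (RatF n) (p ^ (k + 1))
      = algebraMap (WPoly n) (RatF n) p * algebraMap (WPoly n) (RatF n) (p ^ k) := by
    rw [← map_mul, ← pow_succ']
  ext f
  simp only [Module.End.mul_apply, LinearMap.add_apply, mulOp, LinearMap.mulLeft_apply,
    map_neg]
  rw [hLeib i (algebraMap (WPoly n) (RatF n) (p ^ k)) f, halg]
  linear_combination (D i f) * hpow - f * hmap

lemma mem_mulOp (D : Fin n → Module.End ℂ (RatF n)) (q : WPoly n) :
    mulOp q ∈ Algebra.adjoin ℂ (Set.range (mulOp (n := n)) ∪ Set.range D) :=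
  Algebra.subset_adjoin (Set.mem_union_left _ (Set.mem_range_self q))

lemma mem_D (D : Fin n → Module.End ℂ (RatF n)) (j : Fin n) :
    D j ∈ Algebra.adjoin ℂ (Set.range (mulOp (n := n)) ∪ Set.range D) :=
  Algebra.subset_adjoin (Set.mem_union_right _ (Set.mem_range_self j))

lemma step2 (p : WPoly n) (hp : p ≠ 0) (D : Fin n → Module.End ℂ (RatF n))
    (hLeib : ∀ i (a b : RatF n), D i (a * b) = a * D i b + D i a * b)
    (halg : ∀ i (q : WPoly n), D i (algebraMap (WPoly n) (RatF n) q)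
        = algebraMap (WPoly n) (RatF n) (pderiv i q))
    (i : Fin n) (k : ℕ) (v : WPoly n) :
    (mulOp p * D i + mulOp (-((k : WPoly n) * pderiv i p)))
        * LinearMap.mulLeft ℂ (algebraMap (WPoly n) (RatF n) v
            * (algebraMap (WPoly n) (RatF n) p)⁻¹)
      = mulOp v * D i
        + LinearMap.mulLeft ℂ (algebraMap (WPoly n) (RatF n)
            (p * pderiv i v - v * pderiv i p - (k : WPoly n) * (v * pderiv i p))
          * (algebraMap (WPoly n) (RatF n) p)⁻¹) := by
  have hu : algebraMap (WPoly n) (RatF n) p ≠ 0 :=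
    (map_ne_zero_iff _ (IsFractionRing.injective (WPoly n) (RatF n))).mpr hp
  have hDinv : D i (algebraMap (WPoly n) (RatF n) p)⁻¹
      = -(algebraMap (WPoly n) (RatF n) (pderiv i p)
          * (algebraMap (WPoly n) (RatF n) p)⁻¹ * (algebraMap (WPoly n) (RatF n) p)⁻¹) := by
    rw [D_inv D hLeib i _ hu, halg]
  ext f
  simp only [Module.End.mul_apply, LinearMap.add_apply, mulOp, LinearMap.mulLeft_apply,
    map_neg]
  rw [hLeib i (algebraMap (WPoly n) (RatF n) v
        * (algebraMap (WPoly n) (RatF n) p)⁻¹) f,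
    hLeib i (algebraMap (WPoly n) (RatF n) v) (algebraMap (WPoly n) (RatF n) p)⁻¹,
    halg, hDinv]
  simp only [map_sub, map_mul, map_natCast]
  have hsq : (algebraMap (WPoly n) (RatF n)) p ^ 2 * ((algebraMap (WPoly n) (RatF n)) p)⁻¹ ^ 2
      = 1 := by
    rw [← mul_pow, mul_inv_cancel₀ hu, one_pow]
  field_simp
  ring

lemma key (p : WPoly n) (hp : p ≠ 0) (D : Fin n → Module.End ℂ (RatF n))
    (hLeib : ∀ i (a b : RatF n), D i (a * b) = a * D i b + D i a * b)
    (halg : ∀ i (q : WPoly n), D i (algebraMap (WPoly n) (RatF n) q)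
        = algebraMap (WPoly n) (RatF n) (pderiv i q))
    (l : List (Fin n)) :
    ∃ (R : Fin n → Module.End ℂ (RatF n)) (v : WPoly n),
      (∀ j, R j ∈ Algebra.adjoin ℂ (Set.range (mulOp (n := n)) ∪ Set.range D)) ∧
      mulOp (p ^ l.length) * (l.map D).prod
          * LinearMap.mulLeft ℂ (algebraMap (WPoly n) (RatF n) p)⁻¹
        = (∑ j, R j * D j)
          + LinearMap.mulLeft ℂ (algebraMap (WPoly n) (RatF n) v
              * (algebraMap (WPoly n) (RatF n) p)⁻¹) := by
  induction l with
  | nil =>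
    refine ⟨0, 1, fun j => Subalgebra.zero_mem _, ?_⟩
    simp [mulOp, ml_one]
    rfl
  | cons i l ih =>
    obtain ⟨R, v, hR, hEq⟩ := ih
    refine ⟨fun j => (mulOp p * D i + mulOp (-((l.length : WPoly n) * pderiv i p))) * R j
        + if j = i then mulOp v else 0,
      p * pderiv i v - v * pderiv i p - (l.length : WPoly n) * (v * pderiv i p), ?_, ?_⟩
    · intro j
      have hGmem : (mulOp p * D i + mulOp (-((l.length : WPoly n) * pderiv i p)))
          ∈ Algebra.adjoin ℂ (Set.range (mulOp (n := n)) ∪ Set.range D) :=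
        Subalgebra.add_mem _ (Subalgebra.mul_mem _ (mem_mulOp D p) (mem_D D i)) (mem_mulOp D _)
      refine Subalgebra.add_mem _ (Subalgebra.mul_mem _ hGmem (hR j)) ?_
      by_cases h : j = i
      · simpa [h] using mem_mulOp D v
      · simpa [h] using Subalgebra.zero_mem _
    · have hstep : mulOp (p ^ (i :: l).length) * ((i :: l).map D).prod
            * LinearMap.mulLeft ℂ (algebraMap (WPoly n) (RatF n) p)⁻¹
          = (mulOp p * D i + mulOp (-((l.length : WPoly n) * pderiv i p)))
            * (mulOp (p ^ l.length) * (l.map D).prod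
              * LinearMap.mulLeft ℂ (algebraMap (WPoly n) (RatF n) p)⁻¹) := by
        rw [List.map_cons, List.prod_cons, List.length_cons,
          show mulOp (p ^ (l.length + 1)) * (D i * (l.map D).prod)
            = (mulOp (p ^ (l.length + 1)) * D i) * (l.map D).prod from by rw [mul_assoc],
          step1 p D hLeib halg i l.length]
        simp only [mul_assoc]
      rw [hstep, hEq, mul_add, Finset.mul_sum, step2 p hp D hLeib halg i l.length v]
      simp only [add_mul, ite_mul, zero_mul, Finset.sum_add_distrib, mul_assoc,
        Finset.sum_ite_eq', Finset.mem_univ, if_true]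
      abel

end Stmt0Aux


/-- Lemma 2.3 of the paper: if `P` is an order-`d` operator of the Weyl algebra
annihilating `1/p`, then `p^d P` lies in the left ideal generated by the operators
`p ∂_{αᵢ} + ∂p/∂αᵢ`, `i = 1,…,n`.  Here the Weyl algebra is realized as the algebra of
endomorphisms of `ℂ(α)` generated by multiplications by polynomials and the partial
derivatives `D i` (any `ℂ`-linear Leibniz operators extending `∂/∂αᵢ` on polynomials). -/
theorem stmt0 {n : ℕ} (p : WPoly n) (hp : p ≠ 0)
    (D : Fin n → Module.End ℂ (RatF n))
    (hLeib : ∀ i (a b : RatF n), D i (a * b) = a * D i b + D i a * b)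
    (halg : ∀ i (q : WPoly n), D i (algebraMap (WPoly n) (RatF n) q)
        = algebraMap (WPoly n) (RatF n) (pderiv i q))
    (P : Module.End ℂ (RatF n)) (d : ℕ) (hord : OrderLE D d P)
    (hann : P ((algebraMap (WPoly n) (RatF n) p)⁻¹) = 0) :
    ∃ Q : Fin n → Module.End ℂ (RatF n),
      (∀ i, Q i ∈ Algebra.adjoin ℂ (Set.range (mulOp (n := n)) ∪ Set.range D)) ∧
      mulOp (p ^ d) * P
        = ∑ i, Q i * (mulOp p * D i + mulOp (pderiv i p)) := by
  classical
  have hu : algebraMap (WPoly n) (RatF n) p ≠ 0 :=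
    (map_ne_zero_iff _ (IsFractionRing.injective (WPoly n) (RatF n))).mpr hp
  have main : ∀ E : Module.End ℂ (RatF n),
      E ∈ Submodule.span ℂ {E : Module.End ℂ (RatF n) |
        ∃ (q : WPoly n) (l : List (Fin n)), l.length ≤ d ∧ E = mulOp q * (l.map D).prod} →
      ∃ (R : Fin n → Module.End ℂ (RatF n)) (v : WPoly n),
        (∀ j, R j ∈ Algebra.adjoin ℂ (Set.range (mulOp (n := n)) ∪ Set.range D)) ∧
        mulOp (p ^ d) * E * LinearMap.mulLeft ℂ (algebraMap (WPoly n) (RatF n) p)⁻¹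
          = (∑ j, R j * D j) + LinearMap.mulLeft ℂ (algebraMap (WPoly n) (RatF n) v
              * (algebraMap (WPoly n) (RatF n) p)⁻¹) := by
    intro E hE
    induction hE using Submodule.span_induction with
    | mem x hx =>
      obtain ⟨q, l, hl, rfl⟩ := hx
      obtain ⟨R, v, hR, hEq⟩ := Stmt0Aux.key p hp D hLeib halg l
      refine ⟨fun j => mulOp (q * p ^ (d - l.length)) * R j, q * p ^ (d - l.length) * v,
        fun j => Subalgebra.mul_mem _ (Stmt0Aux.mem_mulOp D _) (hR j), ?_⟩
      have hpoly : p ^ d * q = q * p ^ (d - l.length) * p ^ l.length := by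
        rw [mul_assoc, ← pow_add, Nat.sub_add_cancel hl]
        ring
      have e0 : mulOp (p ^ d) * (mulOp q * (l.map D).prod)
          = mulOp (q * p ^ (d - l.length)) * (mulOp (p ^ l.length) * (l.map D).prod) := by
        rw [← mul_assoc, ← Stmt0Aux.mulOp_mul, hpoly, Stmt0Aux.mulOp_mul, mul_assoc]
      have hC : mulOp (q * p ^ (d - l.length))
            * LinearMap.mulLeft ℂ (algebraMap (WPoly n) (RatF n) v
              * (algebraMap (WPoly n) (RatF n) p)⁻¹)
          = LinearMap.mulLeft ℂ (algebraMap (WPoly n) (RatF n) (q * p ^ (d - l.length) * v)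
              * (algebraMap (WPoly n) (RatF n) p)⁻¹) := by
        rw [mulOp, ← Stmt0Aux.ml_mul, ← mul_assoc, ← map_mul]
      have hsum : ∑ j, mulOp (q * p ^ (d - l.length)) * (R j * D j)
          = ∑ j, (mulOp (q * p ^ (d - l.length)) * R j) * D j :=
        Finset.sum_congr rfl fun j _ => (mul_assoc _ _ _).symm
      rw [e0, mul_assoc, hEq, mul_add, Finset.mul_sum, hC, hsum]
    | zero =>
      exact ⟨0, 0, fun j => Subalgebra.zero_mem _, by simp [Stmt0Aux.ml_zero]⟩
    | add x y hx hy ihx ihy =>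
      obtain ⟨R1, v1, h1, e1⟩ := ihx
      obtain ⟨R2, v2, h2, e2⟩ := ihy
      refine ⟨fun j => R1 j + R2 j, v1 + v2,
        fun j => Subalgebra.add_mem _ (h1 j) (h2 j), ?_⟩
      rw [mul_add, add_mul, e1, e2, map_add, add_mul, Stmt0Aux.ml_add]
      simp only [add_mul, Finset.sum_add_distrib]
      abel
    | smul c x hx ih =>
      obtain ⟨R, v, hRm, e⟩ := ih
      refine ⟨fun j => c • R j, c • v, fun j => Subalgebra.smul_mem _ (hRm j) c, ?_⟩
      rw [mul_smul_comm, smul_mul_assoc, e]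
      simp only [smul_mul_assoc, Stmt0Aux.aM_csmul, Stmt0Aux.ml_smul]
      refine (smul_add c (∑ j, R j * D j) (LinearMap.mulLeft ℂ
        (algebraMap (WPoly n) (RatF n) v * (algebraMap (WPoly n) (RatF n) p)⁻¹))).trans ?_
      congr 1
      exact Finset.smul_sum
  obtain ⟨R, v, hR, hEq⟩ := main P hord
  have h1 := DFunLike.congr_fun hEq 1
  simp only [Module.End.mul_apply, LinearMap.mulLeft_apply, mulOp, mul_one,
    LinearMap.add_apply, LinearMap.coe_sum, Finset.sum_apply, hann, mul_zero, map_zero,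
    Stmt0Aux.D_one D hLeib, Finset.sum_const_zero, zero_add] at h1
  have hml : LinearMap.mulLeft ℂ (algebraMap (WPoly n) (RatF n) v
      * (algebraMap (WPoly n) (RatF n) p)⁻¹) = 0 := by
    rw [← h1]
    exact Stmt0Aux.ml_zero
  rw [hml, add_zero] at hEq
  have hinv : LinearMap.mulLeft ℂ (algebraMap (WPoly n) (RatF n) p)⁻¹ * mulOp p = 1 := by
    rw [mulOp, ← Stmt0Aux.ml_mul, inv_mul_cancel₀ hu, Stmt0Aux.ml_one]
  refine ⟨R, hR, ?_⟩
  have hfin : mulOp (p ^ d) * P = (∑ j, R j * D j) * mulOp p := by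
    rw [← hEq, mul_assoc, hinv, mul_one]
  rw [hfin, Finset.sum_mul]
  refine Finset.sum_congr rfl fun j _ => ?_
  rw [mul_assoc]
  congr 1
  rw [mulOp, Stmt0Aux.D_mul_ml D hLeib j, halg]
  rfl
end
end

section
/- Let L₁ = α₁ + α₂ + X₁ + X₂, L₂ = α₁ + X₁ + Y, L₃ = α₂ + X₂ + Y in ℂ(X₁,X₂,Y)[α₁,α₂]. Then the differential operator P₃ = α₁²∂_{α₁} − α₂²∂_{α₂} + 2X₁α₁∂_{α₁} − 2X₂α₂∂_{α₂} + 2α₁ − 2α₂ + (X₁²−Y²)∂_{α₁} − (X₂²−Y²)∂_{α₂} + 2(X₁−X₂) annihilates the rational function 1/(L₁L₂L₃). -/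
open MvPolynomial

noncomputable section

/-- Rational functions in `X₁, X₂, Y, α₁, α₂` (variables indexed `0,…,4`). -/
abbrev K2 := FractionRing (MvPolynomial (Fin 5) ℂ)

noncomputable def cc (q : MvPolynomial (Fin 5) ℂ) : K2 :=
  algebraMap (MvPolynomial (Fin 5) ℂ) K2 q

lemma cc_add (p q : MvPolynomial (Fin 5) ℂ) : cc (p + q) = cc p + cc q := (algebraMap (MvPolynomial (Fin 5) ℂ) K2).map_add p q
lemma cc_mul (p q : MvPolynomial (Fin 5) ℂ) : cc (p * q) = cc p * cc q := (algebraMap (MvPolynomial (Fin 5) ℂ) K2).map_mul p q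
lemma cc_sub (p q : MvPolynomial (Fin 5) ℂ) : cc (p - q) = cc p - cc q := (algebraMap (MvPolynomial (Fin 5) ℂ) K2).map_sub p q
lemma cc_pow (p : MvPolynomial (Fin 5) ℂ) (n : ℕ) : cc (p ^ n) = cc p ^ n := (algebraMap (MvPolynomial (Fin 5) ℂ) K2).map_pow p n
lemma cc_one : cc 1 = 1 := (algebraMap (MvPolynomial (Fin 5) ℂ) K2).map_one
lemma cc_zero : cc 0 = 0 := (algebraMap (MvPolynomial (Fin 5) ℂ) K2).map_zero
lemma cc_two : cc 2 = 2 := by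
  rw [show (2 : MvPolynomial (Fin 5) ℂ) = 1 + 1 by norm_num, cc_add, cc_one]
  norm_num

set_option maxHeartbeats 1000000 in
/-- The operator `P₃` annihilates `1/(L₁L₂L₃)` for the two-site chain.  Here
`D1, D2` are the partial derivatives `∂_{α₁}, ∂_{α₂}` on rational functions, i.e. any
`ℂ`-linear Leibniz operators extending `pderiv 3`, `pderiv 4` on polynomials (`α₁ = X 3`,
`α₂ = X 4`, while `X₁ = X 0`, `X₂ = X 1`, `Y = X 2` are parameters). -/
theorem stmt3
    (D1 D2 : Module.End ℂ K2)
    (h1L : ∀ a b : K2, D1 (a * b) = a * D1 b + D1 a * b)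
    (h2L : ∀ a b : K2, D2 (a * b) = a * D2 b + D2 a * b)
    (h1 : ∀ q : MvPolynomial (Fin 5) ℂ, D1 (cc q) = cc (pderiv 3 q))
    (h2 : ∀ q : MvPolynomial (Fin 5) ℂ, D2 (cc q) = cc (pderiv 4 q)) :
    let X1 := cc (X 0); let X2 := cc (X 1); let Y := cc (X 2)
    let a1 := cc (X 3); let a2 := cc (X 4)
    let L1 := a1 + a2 + X1 + X2
    let L2 := a1 + X1 + Y
    let L3 := a2 + X2 + Y
    let g := (L1 * L2 * L3)⁻¹
    (a1 ^ 2 + 2 * X1 * a1 + (X1 ^ 2 - Y ^ 2)) * D1 g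
      - (a2 ^ 2 + 2 * X2 * a2 + (X2 ^ 2 - Y ^ 2)) * D2 g
      + (2 * a1 - 2 * a2 + 2 * (X1 - X2)) * g = 0 := by
  intro X1 X2 Y a1 a2 L1 L2 L3 g
  set p : MvPolynomial (Fin 5) ℂ :=
    (X 3 + X 4 + X 0 + X 1) * (X 3 + X 0 + X 2) * (X 4 + X 1 + X 2) with hp
  set a : MvPolynomial (Fin 5) ℂ := X 3 ^ 2 + 2 * X 0 * X 3 + (X 0 ^ 2 - X 2 ^ 2) with ha
  set b : MvPolynomial (Fin 5) ℂ := X 4 ^ 2 + 2 * X 1 * X 4 + (X 1 ^ 2 - X 2 ^ 2) with hb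
  set c : MvPolynomial (Fin 5) ℂ := 2 * X 3 - 2 * X 4 + 2 * (X 0 - X 1) with hc
  have hPp : L1 * L2 * L3 = cc p := by
    simp only [L1, L2, L3, X1, X2, Y, a1, a2, hp, cc_add, cc_mul]
  have hpne : p ≠ 0 := by
    intro h
    have h2 := congrArg (fun q => eval (fun _ : Fin 5 => (1 : ℂ)) q) h
    simp [hp] at h2
    norm_num at h2
  have hcpne : cc p ≠ 0 := by
    intro h
    exact hpne (IsFractionRing.injective (MvPolynomial (Fin 5) ℂ) K2
      (h.trans cc_zero.symm))
  have hg : g = (cc p)⁻¹ := by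
    show (L1 * L2 * L3)⁻¹ = (cc p)⁻¹
    rw [hPp]
  have hone : cc p * g = 1 := by
    rw [hg]; exact mul_inv_cancel₀ hcpne
  have hA : (a1 ^ 2 + 2 * X1 * a1 + (X1 ^ 2 - Y ^ 2)) = cc a := by
    simp only [a1, X1, Y, ha, cc_add, cc_mul, cc_sub, cc_pow, cc_two]
  have hB : (a2 ^ 2 + 2 * X2 * a2 + (X2 ^ 2 - Y ^ 2)) = cc b := by
    simp only [a2, X2, Y, hb, cc_add, cc_mul, cc_sub, cc_pow, cc_two]
  have hC : (2 * a1 - 2 * a2 + 2 * (X1 - X2)) = cc c := by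
    simp only [a1, a2, X1, X2, hc, cc_add, cc_mul, cc_sub, cc_two]
  have key : c * p - a * pderiv 3 p + b * pderiv 4 p = 0 := by
    simp only [hp, ha, hb, hc, map_add, map_mul, Derivation.leibniz, pderiv_X,
      smul_eq_mul]
    simp [Pi.single_apply]
    ring
  have hkey : cc c * cc p = cc a * cc (pderiv 3 p) - cc b * cc (pderiv 4 p) := by
    rw [← cc_mul, ← cc_mul, ← cc_mul, ← cc_sub]
    congr 1
    linear_combination key
  clear_value g L3 L2 L1 a2 a1 Y X2 X1
  have hD1one : D1 (1 : K2) = 0 := by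
    have := h1 1
    simpa [cc_one, cc_zero] using this
  have hD2one : D2 (1 : K2) = 0 := by
    have := h2 1
    simpa [cc_one, cc_zero] using this
  have hD1g : D1 g = -cc (pderiv 3 p) * g ^ 2 := by
    have h := h1L (cc p) g
    rw [hone, hD1one, h1] at h
    linear_combination (-g) * h - D1 g * hone
  have hD2g : D2 g = -cc (pderiv 4 p) * g ^ 2 := by
    have h := h2L (cc p) g
    rw [hone, hD2one, h2] at h
    linear_combination (-g) * h - D2 g * hone
  rw [hA, hB, hC, hD1g, hD2g]
  linear_combination g ^ 2 * hkey - cc c * g * hone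
end
end

section
/- Let L₁ = α₁ + α₂ + X₁ + X₂, L₂ = α₁ + X₁ + Y, L₃ = α₂ + X₂ + Y. Then the operator P₁ = α₁α₂∂_{α₂} + α₂²∂_{α₂} + (X₂+Y)α₁∂_{α₂} + (X₁+2X₂+Y)α₂∂_{α₂} + α₁ + 2α₂ + (X₁+X₂)(X₂+Y)∂_{α₂} + (X₁+2X₂+Y) annihilates 1/(L₁L₂L₃). -/
open MvPolynomial

noncomputable section

/-- Rational functions in `X₁, X₂, Y, α₁, α₂` (variables indexed `0,…,4`). -/
abbrev K2c := FractionRing (MvPolynomial (Fin 5) ℂ)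

noncomputable def cc4 (q : MvPolynomial (Fin 5) ℂ) : K2c :=
  algebraMap (MvPolynomial (Fin 5) ℂ) K2c q

set_option maxHeartbeats 1000000
set_option synthInstance.maxHeartbeats 400000

lemma cc4_ne_zero {q : MvPolynomial (Fin 5) ℂ} (h : q ≠ 0) : cc4 q ≠ 0 := by
  intro h0
  exact h (IsFractionRing.injective (MvPolynomial (Fin 5) ℂ) K2c (by simpa [cc4] using h0))

lemma poly_ne (i j k : Fin 5) :
    (X i + X j + X k : MvPolynomial (Fin 5) ℂ) ≠ 0 := by
  intro h
  have := congrArg (eval (fun m => if m = i then 1 else 0)) h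
  simp [eval_X] at this
  split_ifs at this <;> norm_num at this

lemma poly_ne4 (i j k l : Fin 5) :
    (X i + X j + X k + X l : MvPolynomial (Fin 5) ℂ) ≠ 0 := by
  intro h
  have := congrArg (eval (fun m => if m = i then 1 else 0)) h
  simp [eval_X] at this
  split_ifs at this <;> norm_num at this

/-- The operator `P₁ = A ∂_{α₂} + c` annihilates `1/(L₁L₂L₃)` for the two-site chain.
Here `D2` is the partial derivative `∂_{α₂}` on rational functions, i.e. any `ℂ`-linear
Leibniz operator extending `pderiv 4` on polynomials (`α₁ = X 3`, `α₂ = X 4`, while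
`X₁ = X 0`, `X₂ = X 1`, `Y = X 2` are parameters). -/
theorem stmt4
    (D2 : Module.End ℂ K2c)
    (h2L : ∀ a b : K2c, D2 (a * b) = a * D2 b + D2 a * b)
    (h2 : ∀ q : MvPolynomial (Fin 5) ℂ, D2 (cc4 q) = cc4 (pderiv 4 q)) :
    let X1 := cc4 (X 0); let X2 := cc4 (X 1); let Y := cc4 (X 2)
    let a1 := cc4 (X 3); let a2 := cc4 (X 4)
    let L1 := a1 + a2 + X1 + X2
    let L2 := a1 + X1 + Y
    let L3 := a2 + X2 + Y
    let g := (L1 * L2 * L3)⁻¹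
    (a1 * a2 + a2 ^ 2 + (X2 + Y) * a1 + (X1 + 2 * X2 + Y) * a2
        + (X1 + X2) * (X2 + Y)) * D2 g
      + (a1 + 2 * a2 + (X1 + 2 * X2 + Y)) * g = 0 := by
  intro X1 X2 Y a1 a2 L1 L2 L3 g
  have hL1 : L1 = a1 + a2 + X1 + X2 := rfl
  have hL2 : L2 = a1 + X1 + Y := rfl
  have hL3 : L3 = a2 + X2 + Y := rfl
  have hgdef : g = (L1 * L2 * L3)⁻¹ := rfl
  have hD1 : D2 1 = 0 := by simpa using h2L 1 1
  -- derivatives of generators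
  have cadd : ∀ p q : MvPolynomial (Fin 5) ℂ, cc4 (p + q) = cc4 p + cc4 q :=
    fun p q => map_add (algebraMap (MvPolynomial (Fin 5) ℂ) K2c) p q
  have d0 : D2 X1 = 0 := by simpa [pderiv_X, cc4, map_zero, X1] using h2 (X 0)
  have d1 : D2 X2 = 0 := by simpa [pderiv_X, cc4, map_zero, X2] using h2 (X 1)
  have d2 : D2 Y = 0 := by simpa [pderiv_X, cc4, map_zero, Y] using h2 (X 2)
  have d3 : D2 a1 = 0 := by simpa [pderiv_X, cc4, map_zero, a1] using h2 (X 3)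
  have d4 : D2 a2 = 1 := by simpa [pderiv_X, cc4, a2] using h2 (X 4)
  have dL1 : D2 L1 = 1 := by rw [hL1, map_add, map_add, map_add, d0, d1, d3, d4]; ring
  have dL2 : D2 L2 = 0 := by rw [hL2, map_add, map_add, d0, d2, d3]; ring
  have dL3 : D2 L3 = 1 := by rw [hL3, map_add, map_add, d1, d2, d4]; ring
  -- nonvanishing
  have hL1ne : L1 ≠ 0 := by
    have : L1 = cc4 (X 3 + X 4 + X 0 + X 1) := by rw [cadd, cadd, cadd]
    rw [this]
    exact cc4_ne_zero (poly_ne4 3 4 0 1)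
  have hL2ne : L2 ≠ 0 := by
    have : L2 = cc4 (X 3 + X 0 + X 2) := by rw [cadd, cadd]
    rw [this]
    exact cc4_ne_zero (poly_ne 3 0 2)
  have hL3ne : L3 ≠ 0 := by
    have : L3 = cc4 (X 4 + X 1 + X 2) := by rw [cadd, cadd]
    rw [this]
    exact cc4_ne_zero (poly_ne 4 1 2)
  have hp : L1 * L2 * L3 ≠ 0 := mul_ne_zero (mul_ne_zero hL1ne hL2ne) hL3ne
  have hg1 : g * (L1 * L2 * L3) = 1 := by rw [hgdef]; exact inv_mul_cancel₀ hp
  have dP : D2 (L1 * L2 * L3) = L2 * (L1 + L3) := by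
    rw [h2L, h2L, dL1, dL2, dL3]; ring
  have e : g * D2 (L1 * L2 * L3) + D2 g * (L1 * L2 * L3) = 0 := by
    rw [← h2L, hg1, hD1]
  rw [dP] at e
  rw [hL1, hL2, hL3] at e
  apply mul_left_cancel₀ hL2ne
  rw [hL2, mul_zero]
  linear_combination e
end
end

section
/- Let ℓ₁ = X₁+Y₁₂, ℓ₂ = X₂+Y₁₂+Y₂₃, ℓ₃ = X₃+Y₂₃, ℓ₄ = X₁+X₂+X₃, ℓ₅ = X₁+X₂+Y₂₃, ℓ₆ = X₂+X₃+Y₁₂ in the field ℚ(X₁,X₂,X₃,Y₁₂,Y₂₃). Then the following partial fraction identity holds: 4·Y₁₂·Y₂₃·(ℓ₅+ℓ₆)/(ℓ₁ℓ₂ℓ₃ℓ₄ℓ₅ℓ₆) = 1/(ℓ₁ℓ₄ℓ₅) + 1/(ℓ₁ℓ₃ℓ₄) + 1/(ℓ₃ℓ₄ℓ₆) + 1/(ℓ₂ℓ₄ℓ₅) + 1/(ℓ₂ℓ₄ℓ₆) − 1/(ℓ₁ℓ₃ℓ₅) − 1/(ℓ₂ℓ₃ℓ₅) − 1/(ℓ₁ℓ₂ℓ₆)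 − 1/(ℓ₁ℓ₃ℓ₆) + 1/(ℓ₁ℓ₂ℓ₃). -/
open MvPolynomial

noncomputable section

abbrev K3site := FractionRing (MvPolynomial (Fin 5) ℚ)

noncomputable def c3 (q : MvPolynomial (Fin 5) ℚ) : K3site :=
  algebraMap (MvPolynomial (Fin 5) ℚ) K3site q

lemma c3_ne_zero (q : MvPolynomial (Fin 5) ℚ) (h : q ≠ 0) : c3 q ≠ 0 := by
  simpa [c3, map_eq_zero_iff _
    (IsFractionRing.injective (MvPolynomial (Fin 5) ℚ) K3site)] using h

lemma sum_ne (q : MvPolynomial (Fin 5) ℚ)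
    (h : MvPolynomial.eval (fun _ => (1 : ℚ)) q ≠ 0) : c3 q ≠ 0 := by
  apply c3_ne_zero
  intro hq; exact h (by simp [hq])

set_option maxHeartbeats 1000000 in
lemma aux3 {F : Type*} [Field F] (a b c d e f y z : F)
    (ha : a ≠ 0) (hb : b ≠ 0) (hc : c ≠ 0) (hd : d ≠ 0) (he : e ≠ 0) (hf : f ≠ 0)
    (hbeq : b = e + f - d) (hy : 2 * y = a + f - d) (hz : 2 * z = c + e - d) :
    4 * y * z * (e + f) / (a * b * c * d * e * f)
      = 1 / (a * d * e) + 1 / (a * c * d) + 1 / (c * d * f)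
        + (1 / (b * d * e) + 1 / (b * d * f))
        - 1 / (a * c * e) - 1 / (b * c * e)
        - 1 / (a * b * f) - 1 / (a * c * f) + 1 / (a * b * c) := by
  have h4 : 4 * y * z * (e + f) = (2 * y) * (2 * z) * (e + f) := by ring
  rw [h4, hy, hz]
  have hP : a * b * c * d * e * f ≠ 0 := by
    simp [ha, hb, hc, hd, he, hf]
  have r1 : 1 / (a * d * e) = (b * c * f) / (a * b * c * d * e * f) := by
    rw [div_eq_div_iff (by simp [ha, hd, he]) hP]; ring
  have r2 : 1 / (a * c * d) = (b * e * f) / (a * b * c * d * e * f) := by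
    rw [div_eq_div_iff (by simp [ha, hc, hd]) hP]; ring
  have r3 : 1 / (c * d * f) = (a * b * e) / (a * b * c * d * e * f) := by
    rw [div_eq_div_iff (by simp [hc, hd, hf]) hP]; ring
  have r4 : 1 / (b * d * e) = (a * c * f) / (a * b * c * d * e * f) := by
    rw [div_eq_div_iff (by simp [hb, hd, he]) hP]; ring
  have r5 : 1 / (b * d * f) = (a * c * e) / (a * b * c * d * e * f) := by
    rw [div_eq_div_iff (by simp [hb, hd, hf]) hP]; ring
  have r6 : 1 / (a * c * e) = (b * d * f) / (a * b * c * d * e * f) := by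
    rw [div_eq_div_iff (by simp [ha, hc, he]) hP]; ring
  have r7 : 1 / (b * c * e) = (a * d * f) / (a * b * c * d * e * f) := by
    rw [div_eq_div_iff (by simp [hb, hc, he]) hP]; ring
  have r8 : 1 / (a * b * f) = (c * d * e) / (a * b * c * d * e * f) := by
    rw [div_eq_div_iff (by simp [ha, hb, hf]) hP]; ring
  have r9 : 1 / (a * c * f) = (b * d * e) / (a * b * c * d * e * f) := by
    rw [div_eq_div_iff (by simp [ha, hc, hf]) hP]; ring
  have r10 : 1 / (a * b * c) = (d * e * f) / (a * b * c * d * e * f) := by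
    rw [div_eq_div_iff (by simp [ha, hb, hc]) hP]; ring
  rw [r1, r2, r3, r4, r5, r6, r7, r8, r9, r10]
  simp only [← add_div, div_sub_div_same]
  congr 1
  subst hbeq
  ring

/-- Partial fraction decomposition of the flat space wavefunction of the 3-site chain,
as an identity in the field of rational functions `ℚ(X₁,X₂,X₃,Y₁₂,Y₂₃)`. -/
theorem stmt5 :
    let X1 := c3 (X 0); let X2 := c3 (X 1); let X3 := c3 (X 2)
    let Y12 := c3 (X 3); let Y23 := c3 (X 4)
    let l1 := X1 + Y12
    let l2 := X2 + Y12 + Y23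
    let l3 := X3 + Y23
    let l4 := X1 + X2 + X3
    let l5 := X1 + X2 + Y23
    let l6 := X2 + X3 + Y12
    4 * Y12 * Y23 * (l5 + l6) / (l1 * l2 * l3 * l4 * l5 * l6)
      = 1 / (l1 * l4 * l5) + 1 / (l1 * l3 * l4) + 1 / (l3 * l4 * l6)
        + (1 / (l2 * l4 * l5) + 1 / (l2 * l4 * l6))
        - 1 / (l1 * l3 * l5) - 1 / (l2 * l3 * l5)
        - 1 / (l1 * l2 * l6) - 1 / (l1 * l3 * l6) + 1 / (l1 * l2 * l3) := by
  intro X1 X2 X3 Y12 Y23 l1 l2 l3 l4 l5 l6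
  have h1 : l1 ≠ 0 := by
    have : l1 = c3 (X 0 + X 3) := by simp [X1, Y12, l1, c3, map_add]
    rw [this]; exact sum_ne _ (by norm_num)
  have h2 : l2 ≠ 0 := by
    have : l2 = c3 (X 1 + X 3 + X 4) := by simp [X2, Y12, Y23, l2, c3, map_add]
    rw [this]; exact sum_ne _ (by norm_num)
  have h3 : l3 ≠ 0 := by
    have : l3 = c3 (X 2 + X 4) := by simp [X3, Y23, l3, c3, map_add]
    rw [this]; exact sum_ne _ (by norm_num)
  have h4 : l4 ≠ 0 := by
    have : l4 = c3 (X 0 + X 1 + X 2) := by simp [X1, X2, X3, l4, c3, map_add]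
    rw [this]; exact sum_ne _ (by norm_num)
  have h5 : l5 ≠ 0 := by
    have : l5 = c3 (X 0 + X 1 + X 4) := by simp [X1, X2, Y23, l5, c3, map_add]
    rw [this]; exact sum_ne _ (by norm_num)
  have h6 : l6 ≠ 0 := by
    have : l6 = c3 (X 1 + X 2 + X 3) := by simp [X2, X3, Y12, l6, c3, map_add]
    rw [this]; exact sum_ne _ (by norm_num)
  exact aux3 l1 l2 l3 l4 l5 l6 Y12 Y23 h1 h2 h3 h4 h5 h6
    (by simp only [l2, l4, l5, l6]; ring)
    (by simp only [l1, l4, l6]; ring)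
    (by simp only [l3, l4, l5]; ring)
end
end
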